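/- If P is a finite bounded interval order with more than one atom, then there exists an atom a of P such that every cover of a is greater than some atom other than a. -/

import Mathlib

/-- A poset is `(2+2)`-free (an interval order) if it contains no induced subposet
isomorphic to the disjoint union of two 2-element chains. -/
def TwoPlusTwoFree (P : Type*) [Preorder P] : Prop :=
  ¬ ∃ a b c d : P, a < b ∧ c < d ∧
    ¬ a ≤ c ∧ ¬ c ≤ a ∧ ¬ a ≤ d ∧ ¬ d ≤ a ∧ ¬ b ≤ c ∧ ¬ c ≤ b ∧ ¬ b ≤ d ∧ ¬ d ≤ b

/-!
Suppose not: every atom `a` has a cover `c` lying above no other atom. Then `a` is the only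
atom below `c`, and for two distinct atoms `a, b` with such covers `c, d` the chains `a < c` and
`b < d` are pairwise incomparable, forming a `2 + 2`.
-/

section

variable {P : Type*} [PartialOrder P] [OrderBot P]

lemma IsAtom.eq_of_le_of_forall_not_lt {a c x : P} (ha : IsAtom a) (hac : a < c)
    (hc : ∀ a', IsAtom a' → a' ≠ a → ¬ a' < c) (hx : IsAtom x) (hxc : x ≤ c) : x = a := by
  rcases hxc.lt_or_eq with hlt | rfl
  · by_contra hxa
    exact hc x hx hxa hlt
  · exact absurd (hx.2 a hac) ha.1

lemma incomparable_of_unique_atom_le {a b c d : P} (ha : IsAtom a) (hb : IsAtom b) (hba : b ≠ a)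
    (hac : a < c) (hbd : b < d) (hc : ∀ x, IsAtom x → x ≤ c → x = a) :
    ¬ b ≤ a ∧ ¬ b ≤ c ∧ ¬ d ≤ c ∧ ¬ c ≤ b := by
  have hbc : ¬ b ≤ c := fun hle => hba (hc b hb hle)
  refine ⟨fun hle => hbc (hle.trans hac.le), hbc, fun hle => hbc (hbd.le.trans hle), ?_⟩
  exact fun hle => ha.1 (hb.2 a (hac.trans_le hle))

lemma not_twoPlusTwoFree_of_unique_atom_le {a b c d : P} (ha : IsAtom a) (hb : IsAtom b)
    (hab : a ≠ b) (hac : a < c) (hbd : b < d) (hc : ∀ x, IsAtom x → x ≤ c → x = a)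
    (hd : ∀ x, IsAtom x → x ≤ d → x = b) : ¬ TwoPlusTwoFree P := by
  obtain ⟨hba, hbc, hdc, hcb⟩ := incomparable_of_unique_atom_le ha hb hab.symm hac hbd hc
  obtain ⟨hab', had, hcd, hda⟩ := incomparable_of_unique_atom_le hb ha hab hbd hac hd
  exact fun h => h ⟨a, c, b, d, hac, hbd, hab', hba, had, hda, hcb, hbc, hcd, hdc⟩

end

theorem stmt15_general {P : Type*} [PartialOrder P] [BoundedOrder P]
    (h : TwoPlusTwoFree P)
    (hatoms : ∃ a b : P, IsAtom a ∧ IsAtom b ∧ a ≠ b) :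
    ∃ a : P, IsAtom a ∧ ∀ c : P, a ⋖ c → ∃ a' : P, IsAtom a' ∧ a' ≠ a ∧ a' < c := by
  by_contra hcon
  push Not at hcon
  obtain ⟨a, b, ha, hb, hab⟩ := hatoms
  obtain ⟨c, hac, hc⟩ := hcon a ha
  obtain ⟨d, hbd, hd⟩ := hcon b hb
  exact not_twoPlusTwoFree_of_unique_atom_le ha hb hab hac.lt hbd.lt
    (fun _ => ha.eq_of_le_of_forall_not_lt hac.lt hc)
    (fun _ => hb.eq_of_le_of_forall_not_lt hbd.lt hd) h

/-- In a finite bounded interval order with more than one atom, there is an atom `a` such that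
every cover of `a` is greater than some atom other than `a`. -/
theorem stmt15 {P : Type*} [Fintype P] [PartialOrder P] [BoundedOrder P]
    (h : TwoPlusTwoFree P)
    (hatoms : ∃ a b : P, IsAtom a ∧ IsAtom b ∧ a ≠ b) :
    ∃ a : P, IsAtom a ∧ ∀ c : P, a ⋖ c → ∃ a' : P, IsAtom a' ∧ a' ≠ a ∧ a' < c :=
  stmt15_general h hatoms
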